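/- arXiv:1803.07484 — 4 statements merged into one kernel-verified Lean document; each statement's English description precedes it below -/
import Mathlib

section
/- Let m be a positive integer and let σ, τ be two bijections from Fin m to Fin m (schedules of m unit-size jobs, where the value of the bijection at a job is the job's position). Then the Spearman distance equals twice the tardiness: ∑_{i} |pos(i,τ) − pos(i,σ)| = 2 · ∑_{i} max(0, pos(i,τ) − pos(i,σ)), where pos(i,π) denotes the position π(i) of job i in schedule π. -/
/-! Since `|x| = 2 · max 0 x - x`, the Spearman distance is twice the tardiness minus the total
displacement `∑ i, (τ i - σ i)`, and the total displacement vanishes because `τ` and `σ` both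
enumerate every position exactly once. -/

open Finset

section LinearOrderedRing

variable {α : Type*} [Ring α] [LinearOrder α] [IsOrderedRing α]

theorem abs_eq_two_mul_max_zero_sub (x : α) : |x| = 2 * max 0 x - x := by
  rcases le_total 0 x with hx | hx
  · rw [abs_of_nonneg hx, max_eq_right hx, two_mul, add_sub_cancel_right]
  · rw [abs_of_nonpos hx, max_eq_left hx, mul_zero, zero_sub]

theorem Finset.sum_abs_eq_two_mul_sum_max_zero {ι : Type*} {s : Finset ι} {f : ι → α}
    (hf : ∑ i ∈ s, f i = 0) : ∑ i ∈ s, |f i| = 2 * ∑ i ∈ s, max 0 (f i) := by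
  simp_rw [abs_eq_two_mul_max_zero_sub (f _)]
  rw [sum_sub_distrib, hf, sub_zero, mul_sum]

end LinearOrderedRing

theorem Equiv.Perm.sum_comp_sub_comp_eq_zero {ι G : Type*} [Fintype ι] [AddCommGroup G]
    (σ τ : Equiv.Perm ι) (f : ι → G) : ∑ i, (f (τ i) - f (σ i)) = 0 := by
  rw [sum_sub_distrib, Equiv.sum_comp τ f, Equiv.sum_comp σ f, sub_self]

theorem spearman_eq_two_mul_tardiness_general (m : ℕ)
    (σ τ : Equiv.Perm (Fin m)) :
    ∑ i : Fin m, |((τ i : ℕ) : ℤ) - ((σ i : ℕ) : ℤ)|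
      = 2 * ∑ i : Fin m, max 0 (((τ i : ℕ) : ℤ) - ((σ i : ℕ) : ℤ)) :=
  sum_abs_eq_two_mul_sum_max_zero (σ.sum_comp_sub_comp_eq_zero τ fun j => ((j : ℕ) : ℤ))

/-- Proposition 1 (unit-size jobs): the Spearman distance between two schedules
equals twice the tardiness, where a schedule of `m` unit-size jobs is a bijection
`Fin m ≃ Fin m` assigning each job its position. -/
theorem spearman_eq_two_mul_tardiness (m : ℕ) (hm : 0 < m)
    (σ τ : Equiv.Perm (Fin m)) :
    ∑ i : Fin m, |((τ i : ℕ) : ℤ) - ((σ i : ℕ) : ℤ)|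
      = 2 * ∑ i : Fin m, max 0 (((τ i : ℕ) : ℤ) - ((σ i : ℕ) : ℤ)) :=
  spearman_eq_two_mul_tardiness_general m σ τ
end

section
/- For every real α > 1 there exist a number of jobs m, processing times p : Fin m → ℕ (all positive), and preferred schedules σ₁, σ₂ of two agents, such that: every schedule τ that is Pareto-consistent with the profile (σ₁, σ₂) satisfies ∑_{a∈{1,2}} T(τ, σ_a) > α · min over all schedules ρ of ∑_{a∈{1,2}} T(ρ, σ_a). -/
/-- Completion time of job `i` in schedule `τ` (a bijection from jobs to positions),
with processing times `p`: the total processing time of jobs scheduled no later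
than `i`. -/
def completionTime {m : ℕ} (p : Fin m → ℕ) (τ : Equiv.Perm (Fin m)) (i : Fin m) : ℕ :=
  ∑ j ∈ Finset.univ.filter (fun j => τ j ≤ τ i), p j

/-- Tardiness cost of an agent with preferred schedule `σ` for the schedule `τ`:
`∑ i, max (0, C_i(τ) - C_i(σ))` (via truncated subtraction on ℕ). -/
def tardiness {m : ℕ} (p : Fin m → ℕ) (τ σ : Equiv.Perm (Fin m)) : ℕ :=
  ∑ i : Fin m, (completionTime p τ i - completionTime p σ i)

/-!
Take one long job of length `n + 1` followed by `n = 2k` unit jobs. Both agents start with the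
long job; the first then runs the unit jobs in order, the second in reverse order. Pareto
consistency forces the long job first, and then the unit job in position `x` is late by at least
`2x - (n + 1)` over the two agents, because its two preferred positions add up to `n + 1`; in
total that is `k²`. Moving the long job to the end instead costs each agent only `n`, since every
unit job then completes by time `n`, before it does in either preferred schedule. So the optimum
is at most `4k`, and `k > 4α` gives the gap.
-/

open Finset Equiv

theorem Equiv.Perm.card_filter_apply_le_apply {m : ℕ} (τ : Perm (Fin m)) (i : Fin m) :
    #{j | τ j ≤ τ i} = τ i + 1 := by
  have h : ({j | τ j ≤ τ i} : Finset (Fin m)) = (Iic (τ i)).map τ.symm.toEmbedding := by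
    ext j
    simp
  rw [h, card_map, Fin.card_Iic]

namespace TardinessGap

theorem apply_eq_zero_of_pareto {n : ℕ} {σ₁ σ₂ τ : Perm (Fin (n + 1))} {j : Fin (n + 1)}
    (hτ : ∀ k ℓ, σ₁ k < σ₁ ℓ → σ₂ k < σ₂ ℓ → τ k < τ ℓ) (h₁ : σ₁ j = 0) (h₂ : σ₂ j = 0) :
    τ j = 0 := by
  by_contra hne
  set i := τ.symm 0
  have hij : j ≠ i := by rintro rfl; simp [i] at hne
  have hfirst (σ : Perm (Fin (n + 1))) (hσ : σ j = 0) : σ j < σ i := by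
    rw [hσ, Fin.pos_iff_ne_zero, ← hσ]
    exact σ.injective.ne hij.symm
  exact absurd (hτ j i (hfirst σ₁ h₁) (hfirst σ₂ h₂)) (by simp [i])

def longJobTimes (n : ℕ) : Fin (n + 1) → ℕ := fun j => if j = 0 then n + 1 else 1

theorem longJobTimes_pos (n : ℕ) (j : Fin (n + 1)) : 0 < longJobTimes n j := by
  unfold longJobTimes; split_ifs <;> omega

theorem completionTime_longJobTimes (n : ℕ) (τ : Perm (Fin (n + 1))) (i : Fin (n + 1)) :
    completionTime (longJobTimes n) τ i = τ i + 1 + if τ 0 ≤ τ i then n else 0 := by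
  have h (j : Fin (n + 1)) : longJobTimes n j = 1 + if j = 0 then n else 0 := by
    unfold longJobTimes; split_ifs <;> omega
  simp only [completionTime, h, sum_add_distrib, sum_const, smul_eq_mul, mul_one,
    τ.card_filter_apply_le_apply, sum_ite_eq', mem_filter, mem_univ, true_and]

theorem completionTime_longJobTimes_of_apply_zero {n : ℕ} {τ : Perm (Fin (n + 1))}
    (h : τ 0 = 0) (i : Fin (n + 1)) : completionTime (longJobTimes n) τ i = τ i + 1 + n := by
  simp [completionTime_longJobTimes, h]

theorem tardiness_longJobTimes_of_last {n : ℕ} {τ σ : Perm (Fin (n + 1))}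
    (hτ : τ 0 = Fin.last n) (hσ : σ 0 = 0) : tardiness (longJobTimes n) τ σ = n := by
  have hterm (i : Fin (n + 1)) :
      completionTime (longJobTimes n) τ i - completionTime (longJobTimes n) σ i =
        if i = 0 then n else 0 := by
    rw [completionTime_longJobTimes, completionTime_longJobTimes_of_apply_zero hσ, hτ]
    by_cases hi : i = 0
    · subst hi
      simp only [hτ, hσ, le_refl, if_true, Fin.val_last, Fin.val_zero]
      omega
    · have hlt : τ i < Fin.last n := (Fin.le_last _).lt_of_ne (hτ ▸ τ.injective.ne hi)
      simp only [hi, not_le.mpr hlt, if_false]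
      have : (τ i : ℕ) < n := hlt
      omega
  simp [tardiness, hterm]

def reversedTail (n : ℕ) : Perm (Fin (n + 1)) := Perm.decomposeFin.symm (0, Fin.revPerm)

theorem reversedTail_zero (n : ℕ) : reversedTail n 0 = 0 := by
  simp [reversedTail, Perm.decomposeFin_symm_apply_zero]

theorem val_reversedTail_add_val_le (n : ℕ) (i : Fin (n + 1)) :
    (reversedTail n i : ℕ) + i ≤ n + 1 := by
  cases i using Fin.cases with
  | zero => simp [reversedTail_zero]
  | succ j =>
    simp only [reversedTail, Perm.decomposeFin_symm_apply_succ, swap_self, Fin.revPerm_apply,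
      refl_apply, Fin.val_succ, Fin.val_rev]
    omega

theorem sum_two_mul_sub_le_tardiness {n : ℕ} {τ : Perm (Fin (n + 1))} (hτ : τ 0 = 0) :
    ∑ i, (2 * (τ i : ℕ) - (n + 1)) ≤
      tardiness (longJobTimes n) τ 1 + tardiness (longJobTimes n) τ (reversedTail n) := by
  rw [tardiness, tardiness, ← sum_add_distrib]
  refine sum_le_sum fun i _ => ?_
  simp only [completionTime_longJobTimes_of_apply_zero hτ,
    completionTime_longJobTimes_of_apply_zero (reversedTail_zero n),
    completionTime_longJobTimes_of_apply_zero (Perm.one_apply 0), Perm.one_apply]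
  have := val_reversedTail_add_val_le n i
  omega

theorem sum_range_two_mul_sub_eq_sq (k : ℕ) :
    ∑ x ∈ range (2 * k + 1), (2 * x - (2 * k + 1)) = k ^ 2 := by
  have hodd : ∀ l, ∑ x ∈ range l, (2 * x + 1) = l ^ 2 := by
    intro l
    induction l with
    | zero => rfl
    | succ l ih => rw [sum_range_succ, ih]; ring
  rw [← hodd, show 2 * k + 1 = (k + 1) + k by ring, sum_range_add,
    sum_eq_zero fun x hx => by rw [mem_range] at hx; omega, zero_add]
  exact sum_congr rfl fun x _ => by omega

theorem sum_two_mul_apply_sub_eq_sq (k : ℕ) (τ : Perm (Fin (2 * k + 1))) :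
    ∑ i, (2 * (τ i : ℕ) - (2 * k + 1)) = k ^ 2 := by
  rw [Equiv.sum_comp τ fun x => 2 * (x : ℕ) - (2 * k + 1), Fin.sum_univ_eq_sum_range
    (fun x => 2 * x - (2 * k + 1)), sum_range_two_mul_sub_eq_sq]

end TardinessGap

open TardinessGap

/-- For every `α > 1` there is an instance (jobs with positive processing times and
two agents) on which every Pareto-consistent schedule has total tardiness strictly
larger than `α` times the minimum total tardiness: no Pareto-efficient rule is
`α`-approximate for Σ-T. -/
theorem no_pareto_efficient_approx_sum_tardiness (α : ℝ) (hα : 1 < α) :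
    ∃ (m : ℕ) (p : Fin m → ℕ) (σ₁ σ₂ : Equiv.Perm (Fin m)),
      (∀ i, 0 < p i) ∧
      ∃ ρmin : Equiv.Perm (Fin m),
        (∀ ρ : Equiv.Perm (Fin m),
          tardiness p ρmin σ₁ + tardiness p ρmin σ₂
            ≤ tardiness p ρ σ₁ + tardiness p ρ σ₂) ∧
        ∀ τ : Equiv.Perm (Fin m),
          (∀ k ℓ : Fin m, σ₁ k < σ₁ ℓ → σ₂ k < σ₂ ℓ → τ k < τ ℓ) →
          α * ((tardiness p ρmin σ₁ + tardiness p ρmin σ₂ : ℕ) : ℝ)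
            < ((tardiness p τ σ₁ + tardiness p τ σ₂ : ℕ) : ℝ) := by
  obtain ⟨k, hk⟩ := exists_nat_gt (4 * α)
  set cost := fun ρ : Perm (Fin (2 * k + 1)) =>
    tardiness (longJobTimes (2 * k)) ρ 1 +
      tardiness (longJobTimes (2 * k)) ρ (reversedTail (2 * k))
  obtain ⟨ρmin, hmin⟩ := Finite.exists_min cost
  refine ⟨2 * k + 1, longJobTimes (2 * k), 1, reversedTail (2 * k), longJobTimes_pos _,
    ρmin, hmin, fun τ hτ => ?_⟩
  have hopt : cost ρmin ≤ 4 * k := by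
    have hlast : swap 0 (Fin.last (2 * k)) 0 = Fin.last (2 * k) := swap_apply_left _ _
    refine (hmin (swap 0 (Fin.last (2 * k)))).trans_eq ?_
    simp only [cost, tardiness_longJobTimes_of_last hlast (Perm.one_apply 0),
      tardiness_longJobTimes_of_last hlast (reversedTail_zero _)]
    ring
  have hpareto : k ^ 2 ≤ cost τ := by
    have hfirst := apply_eq_zero_of_pareto hτ (Perm.one_apply 0) (reversedTail_zero _)
    exact (sum_two_mul_apply_sub_eq_sq k τ).symm.trans_le (sum_two_mul_sub_le_tardiness hfirst)
  calc α * (cost ρmin : ℝ) ≤ α * (4 * k) := by gcongr; exact_mod_cast hopt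
    _ < k ^ 2 := by nlinarith
    _ ≤ cost τ := by exact_mod_cast hpareto
end

section
/- Let w₁,…,w_n ∈ {0,1}^m be binary strings and d ∈ ℕ. Construct 2m unit-size jobs {A_i, B_i : i ∈ Fin m} and n agents, where agent j's preferred schedule places all jobs of index i before all jobs of index i' whenever i < i', and within index i places A_i before B_i if w_j(i) = 1 and B_i before A_i otherwise. Then there exists a binary string c ∈ {0,1}^m with Hamming distance at most d to every w_j if and only if there exists a schedule τ of the 2m jobs with max_{j=1,…,n} T(τ, σ_j) ≤ d. -/
open Finset

/-! ### Auxiliary definitions and lemmas -/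

/-- The canonical block schedule: index `i` occupies positions `2i, 2i+1`,
with `A_i` before `B_i`. -/
def baseEquiv (m : ℕ) : (Fin m ⊕ Fin m) ≃ Fin (2 * m) where
  toFun := Sum.elim (fun i => ⟨2 * i, by omega⟩) (fun i => ⟨2 * i + 1, by omega⟩)
  invFun p := if (p : ℕ) % 2 = 0 then Sum.inl ⟨(p : ℕ) / 2, by omega⟩
    else Sum.inr ⟨(p : ℕ) / 2, by omega⟩
  left_inv := by
    rintro (i | i)
    · simp only [Sum.elim_inl]
      show (if 2 * (i : ℕ) % 2 = 0 then _ else _) = _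
      rw [if_pos (Nat.mul_mod_right 2 (i : ℕ))]
      exact congrArg Sum.inl (Fin.ext (show 2 * (i : ℕ) / 2 = i by omega))
    · simp only [Sum.elim_inr]
      show (if (2 * (i : ℕ) + 1) % 2 = 0 then _ else _) = _
      rw [if_neg (show ¬(2 * (i : ℕ) + 1) % 2 = 0 by omega)]
      exact congrArg Sum.inr (Fin.ext (show (2 * (i : ℕ) + 1) / 2 = i by omega))
  right_inv := by
    intro p
    beta_reduce
    by_cases h : (p : ℕ) % 2 = 0
    · rw [if_pos h, Sum.elim_inl]
      exact Fin.ext (show 2 * ((p : ℕ) / 2) = p by omega)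
    · rw [if_neg h, Sum.elim_inr]
      exact Fin.ext (show 2 * ((p : ℕ) / 2) + 1 = p by omega)

/-- Swap `A_i ↔ B_i` at all indices where `c i = false`. -/
def swapPerm {m : ℕ} (c : Fin m → Bool) : Equiv.Perm (Fin m ⊕ Fin m) :=
  Function.Involutive.toPerm
    (Sum.elim (fun i => if c i then Sum.inl i else Sum.inr i)
      (fun i => if c i then Sum.inr i else Sum.inl i))
    (by rintro (i | i) <;> by_cases h : c i <;> simp [h])

/-- The schedule associated to a binary string `c`. -/
def sched {m : ℕ} (c : Fin m → Bool) : (Fin m ⊕ Fin m) ≃ Fin (2 * m) :=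
  (swapPerm c).trans (baseEquiv m)

lemma sched_inl_true {m : ℕ} {c : Fin m → Bool} {i : Fin m} (h : c i = true) :
    ((sched c) (Sum.inl i) : ℕ) = 2 * i := by
  simp [sched, swapPerm, baseEquiv, Function.Involutive.toPerm, h]

lemma sched_inr_true {m : ℕ} {c : Fin m → Bool} {i : Fin m} (h : c i = true) :
    ((sched c) (Sum.inr i) : ℕ) = 2 * i + 1 := by
  simp [sched, swapPerm, baseEquiv, Function.Involutive.toPerm, h]

lemma sched_inl_false {m : ℕ} {c : Fin m → Bool} {i : Fin m} (h : c i = false) :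
    ((sched c) (Sum.inl i) : ℕ) = 2 * i + 1 := by
  simp [sched, swapPerm, baseEquiv, Function.Involutive.toPerm, h]

lemma sched_inr_false {m : ℕ} {c : Fin m → Bool} {i : Fin m} (h : c i = false) :
    ((sched c) (Sum.inr i) : ℕ) = 2 * i := by
  simp [sched, swapPerm, baseEquiv, Function.Involutive.toPerm, h]

lemma card_filter_le_equiv {N : ℕ} {α : Type*} [Fintype α] [DecidableEq α]
    (e : α ≃ Fin N) (t : ℕ) (ht : t < N) :
    (univ.filter fun x => (e x : ℕ) ≤ t).card = t + 1 := by
  have himg : (univ.filter fun x => (e x : ℕ) ≤ t).image e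
      = univ.filter (fun p : Fin N => (p : ℕ) ≤ t) := by
    ext p
    simp only [mem_image, mem_filter, mem_univ, true_and]
    constructor
    · rintro ⟨x, hx, rfl⟩; exact hx
    · intro hp; exact ⟨e.symm p, by simpa using hp, e.apply_symm_apply p⟩
  have h2 : (univ.filter (fun p : Fin N => (p : ℕ) ≤ t)).card = t + 1 := by
    have : (univ.filter (fun p : Fin N => (p : ℕ) ≤ t)) = Finset.Iic ⟨t, ht⟩ := by
      ext p; simp [Fin.le_def]
    rw [this, Fin.card_Iic]
  rw [← Finset.card_image_of_injective _ e.injective, himg, h2]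

lemma sub_eq_card_range {N a b : ℕ} (ha : a ≤ N) :
    a - b = ∑ t ∈ Finset.range N, (if b ≤ t ∧ t < a then 1 else 0) := by
  rw [← Finset.card_filter]
  have : (Finset.range N).filter (fun t => b ≤ t ∧ t < a) = Finset.Ico b a := by
    ext t; simp [Finset.mem_Ico]; omega
  rw [this, Nat.card_Ico]

/-- Number of jobs scheduled at position `≤ t` by `σ` but `> t` by `τ`. -/
def cross {m : ℕ} (τ σ : (Fin m ⊕ Fin m) ≃ Fin (2 * m)) (t : ℕ) : ℕ :=
  (univ.filter fun x : Fin m ⊕ Fin m => (σ x : ℕ) ≤ t ∧ t < (τ x : ℕ)).card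

lemma sum_sub_eq_sum_cross {m : ℕ} (τ σ : (Fin m ⊕ Fin m) ≃ Fin (2 * m)) :
    ∑ x : Fin m ⊕ Fin m, ((τ x : ℕ) - (σ x : ℕ))
      = ∑ t ∈ Finset.range (2 * m), cross τ σ t :=
  calc ∑ x : Fin m ⊕ Fin m, ((τ x : ℕ) - (σ x : ℕ))
      = ∑ x : Fin m ⊕ Fin m, ∑ t ∈ Finset.range (2 * m),
          (if (σ x : ℕ) ≤ t ∧ t < (τ x : ℕ) then 1 else 0) :=
        Finset.sum_congr rfl (fun x _ => sub_eq_card_range (τ x).isLt.le)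
    _ = ∑ t ∈ Finset.range (2 * m), ∑ x : Fin m ⊕ Fin m,
          (if (σ x : ℕ) ≤ t ∧ t < (τ x : ℕ) then 1 else 0) := Finset.sum_comm
    _ = ∑ t ∈ Finset.range (2 * m), cross τ σ t :=
        Finset.sum_congr rfl (fun _ _ => (Finset.card_filter _ _).symm)

/-- The job of index `i` scheduled first by an agent with string `w`. -/
def uJob {m : ℕ} (w : Fin m → Bool) (i : Fin m) : Fin m ⊕ Fin m :=
  if w i then Sum.inl i else Sum.inr i

/-- The job of index `i` scheduled second by an agent with string `w`. -/
def vJob {m : ℕ} (w : Fin m → Bool) (i : Fin m) : Fin m ⊕ Fin m :=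
  if w i then Sum.inr i else Sum.inl i

/-- Key counting lemma: the Hamming distance between the string read off from a
schedule `τ` and an agent's string `w` is at most the agent's tardiness. -/
lemma hamming_le_tardiness {m : ℕ} (w : Fin m → Bool) (c : Fin m → Bool)
    (τ σ : (Fin m ⊕ Fin m) ≃ Fin (2 * m))
    (hσ : ∀ i : Fin m,
      (w i = true → (σ (Sum.inl i) : ℕ) = 2 * (i : ℕ) ∧
        (σ (Sum.inr i) : ℕ) = 2 * (i : ℕ) + 1) ∧
      (w i = false → (σ (Sum.inr i) : ℕ) = 2 * (i : ℕ) ∧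
        (σ (Sum.inl i) : ℕ) = 2 * (i : ℕ) + 1))
    (hc : ∀ i, c i = true ↔ (τ (Sum.inl i) : ℕ) < (τ (Sum.inr i) : ℕ)) :
    (univ.filter fun i : Fin m => c i ≠ w i).card
      ≤ ∑ x : Fin m ⊕ Fin m, ((τ x : ℕ) - (σ x : ℕ)) := by
  classical
  have hu : ∀ i, (σ (uJob w i) : ℕ) = 2 * (i : ℕ) := by
    intro i
    by_cases hwi : w i = true
    · simp only [uJob, hwi, if_true]; exact ((hσ i).1 hwi).1
    · have hwf : w i = false := by simpa using hwi
      simp only [uJob, hwf]; simp only [Bool.false_eq_true, if_false]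
      exact ((hσ i).2 hwf).1
  have hv : ∀ i, (σ (vJob w i) : ℕ) = 2 * (i : ℕ) + 1 := by
    intro i
    by_cases hwi : w i = true
    · simp only [vJob, hwi, if_true]; exact ((hσ i).1 hwi).2
    · have hwf : w i = false := by simpa using hwi
      simp only [vJob, hwf]; simp only [Bool.false_eq_true, if_false]
      exact ((hσ i).2 hwf).2
  set D := univ.filter fun i : Fin m => c i ≠ w i with hD
  have hmis : ∀ i ∈ D, (τ (vJob w i) : ℕ) < (τ (uJob w i) : ℕ) := by
    intro i hi
    rw [hD, mem_filter] at hi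
    have hne : (τ (Sum.inl i) : ℕ) ≠ (τ (Sum.inr i) : ℕ) := by
      intro h
      exact Sum.inl_ne_inr (τ.injective (Fin.val_injective h))
    by_cases hwi : w i = true
    · have hcf : c i = false := by
        cases hcc : c i
        · rfl
        · exact absurd (hcc.trans hwi.symm) hi.2
      have : ¬ (τ (Sum.inl i) : ℕ) < (τ (Sum.inr i) : ℕ) := by
        rw [← hc i, hcf]; simp
      simp only [uJob, vJob, hwi, if_true]
      omega
    · have hwf : w i = false := by simpa using hwi
      have hct : c i = true := by
        cases hcc : c i
        · exact absurd (hcc.trans hwf.symm) hi.2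
        · rfl
      have := (hc i).mp hct
      simp only [uJob, vJob, hwf, Bool.false_eq_true, if_false]
      omega
  set tfun : Fin m → ℕ := fun i =>
    if 2 * (i : ℕ) + 1 ≤ (τ (uJob w i) : ℕ) then 2 * (i : ℕ) else 2 * (i : ℕ) - 1
    with htfun
  have hpos : ∀ i ∈ D, ¬ (2 * (i : ℕ) + 1 ≤ (τ (uJob w i) : ℕ)) → 1 ≤ 2 * (i : ℕ) := by
    intro i hi h
    have := hmis i hi
    omega
  have hlt : ∀ i ∈ D, tfun i < 2 * m := by
    intro i _
    have : (i : ℕ) < m := i.isLt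
    rw [htfun]; dsimp only; split_ifs <;> omega
  have hcross1 : ∀ i ∈ D, 1 ≤ cross τ σ (tfun i) := by
    intro i hi
    rw [htfun]; dsimp only
    split_ifs with h
    · refine Finset.card_pos.mpr ⟨uJob w i, ?_⟩
      rw [mem_filter]
      refine ⟨mem_univ _, ?_, ?_⟩
      · rw [hu i]
      · omega
    · have h2i : 1 ≤ 2 * (i : ℕ) := hpos i hi h
      have hvle : (τ (vJob w i) : ℕ) ≤ 2 * (i : ℕ) - 1 := by
        have := hmis i hi; omega
      by_contra hcon
      have hzero : (univ.filter fun x : Fin m ⊕ Fin m =>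
          (σ x : ℕ) ≤ 2 * (i : ℕ) - 1 ∧ 2 * (i : ℕ) - 1 < (τ x : ℕ)) = ∅ := by
        apply Finset.card_eq_zero.mp
        unfold cross at hcon
        omega
      have hAB : ∀ x : Fin m ⊕ Fin m, (σ x : ℕ) ≤ 2 * (i : ℕ) - 1 →
          (τ x : ℕ) ≤ 2 * (i : ℕ) - 1 := by
        intro x hx
        by_contra hxx
        have hxm : x ∈ (univ.filter fun x : Fin m ⊕ Fin m =>
            (σ x : ℕ) ≤ 2 * (i : ℕ) - 1 ∧ 2 * (i : ℕ) - 1 < (τ x : ℕ)) :=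
          mem_filter.mpr ⟨mem_univ x, hx, by omega⟩
        rw [hzero] at hxm
        exact absurd hxm (Finset.notMem_empty x)
      have hsub : (univ.filter fun x : Fin m ⊕ Fin m => (σ x : ℕ) ≤ 2 * (i : ℕ) - 1)
          ⊆ ((univ.filter fun x : Fin m ⊕ Fin m => (τ x : ℕ) ≤ 2 * (i : ℕ) - 1).erase
              (vJob w i)) := by
        intro x hx
        rw [mem_filter] at hx
        refine Finset.mem_erase.mpr ⟨?_, mem_filter.mpr ⟨mem_univ x, hAB x hx.2⟩⟩
        rintro rfl
        have := hv i
        omega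
      have hA := card_filter_le_equiv σ (2 * (i : ℕ) - 1) (by have := i.isLt; omega)
      have hB := card_filter_le_equiv τ (2 * (i : ℕ) - 1) (by have := i.isLt; omega)
      have hvmem : vJob w i ∈ univ.filter fun x : Fin m ⊕ Fin m =>
          (τ x : ℕ) ≤ 2 * (i : ℕ) - 1 := mem_filter.mpr ⟨mem_univ _, hvle⟩
      have hcard := Finset.card_le_card hsub
      rw [hA, Finset.card_erase_of_mem hvmem, hB] at hcard
      omega
  have hinj : Set.InjOn tfun ↑D := by
    intro i hi i' hi' heq
    rw [Finset.mem_coe] at hi hi'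
    rw [htfun] at heq
    dsimp only at heq
    split_ifs at heq with h1 h2 h2 <;>
      [skip; (have := hpos i' hi' h2); (have := hpos i hi h1);
        (have := hpos i hi h1; have := hpos i' hi' h2)] <;>
      exact Fin.ext (by omega)
  rw [sum_sub_eq_sum_cross]
  calc D.card = (D.image tfun).card := (Finset.card_image_of_injOn hinj).symm
    _ = ∑ s ∈ D.image tfun, 1 := Finset.card_eq_sum_ones _
    _ ≤ ∑ s ∈ D.image tfun, cross τ σ s := by
        refine Finset.sum_le_sum ?_
        intro s hs
        obtain ⟨i, hi, rfl⟩ := Finset.mem_image.mp hs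
        exact hcross1 i hi
    _ ≤ ∑ t ∈ Finset.range (2 * m), cross τ σ t := by
        refine Finset.sum_le_sum_of_subset ?_
        intro s hs
        obtain ⟨i, hi, rfl⟩ := Finset.mem_image.mp hs
        exact Finset.mem_range.mpr (hlt i hi)

/-- Core of the NP-hardness of the max-T rule (reduction from Closest String with
binary alphabet).  There are `2m` unit-size jobs `A_i = Sum.inl i`,
`B_i = Sum.inr i`; agent `j`'s preferred schedule `σs j` places all jobs of index
`i` before all jobs of index `i'` whenever `i < i'`, and within index `i` places
`A_i` before `B_i` iff `w j i = true` (so positions are `2i` and `2i+1`).  For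
unit-size jobs the completion time of a job is its position plus one, so the
tardiness of agent `j` is `T(τ, σs j) = ∑ i, max (0, τ(i) − σs j (i))`.  Then
there is a string `c` within Hamming distance `d` of every `w j` iff there is a
schedule `τ` with `max_j T(τ, σs j) ≤ d`. -/
theorem max_tardiness_closest_string_reduction (m n : ℕ)
    (w : Fin n → Fin m → Bool) (d : ℕ)
    (σs : Fin n → ((Fin m ⊕ Fin m) ≃ Fin (2 * m)))
    (hσ : ∀ (j : Fin n) (i : Fin m),
      (w j i = true → (σs j (Sum.inl i) : ℕ) = 2 * (i : ℕ) ∧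
        (σs j (Sum.inr i) : ℕ) = 2 * (i : ℕ) + 1) ∧
      (w j i = false → (σs j (Sum.inr i) : ℕ) = 2 * (i : ℕ) ∧
        (σs j (Sum.inl i) : ℕ) = 2 * (i : ℕ) + 1)) :
    (∃ c : Fin m → Bool,
        ∀ j : Fin n, (Finset.univ.filter (fun i : Fin m => c i ≠ w j i)).card ≤ d)
      ↔ (∃ τ : (Fin m ⊕ Fin m) ≃ Fin (2 * m),
          ∀ j : Fin n, ∑ i : Fin m ⊕ Fin m, ((τ i : ℕ) - (σs j i : ℕ)) ≤ d) := by
  constructor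
  · rintro ⟨c, hcd⟩
    refine ⟨sched c, fun j => ?_⟩
    have hterm : ∀ i : Fin m,
        (((sched c) (Sum.inl i) : ℕ) - (σs j (Sum.inl i) : ℕ))
          + (((sched c) (Sum.inr i) : ℕ) - (σs j (Sum.inr i) : ℕ))
        = if c i ≠ w j i then 1 else 0 := by
      intro i
      rcases Bool.dichotomy (c i) with hci | hci <;>
        rcases Bool.dichotomy (w j i) with hwi | hwi
      · rw [sched_inl_false hci, sched_inr_false hci,
          ((hσ j i).2 hwi).1, ((hσ j i).2 hwi).2, hci, hwi]
        simp
      · rw [sched_inl_false hci, sched_inr_false hci,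
          ((hσ j i).1 hwi).1, ((hσ j i).1 hwi).2, hci, hwi]
        simp
      · rw [sched_inl_true hci, sched_inr_true hci,
          ((hσ j i).2 hwi).1, ((hσ j i).2 hwi).2, hci, hwi]
        simp
      · rw [sched_inl_true hci, sched_inr_true hci,
          ((hσ j i).1 hwi).1, ((hσ j i).1 hwi).2, hci, hwi]
        simp
    calc ∑ x : Fin m ⊕ Fin m, (((sched c) x : ℕ) - (σs j x : ℕ))
        = ∑ i : Fin m, ((((sched c) (Sum.inl i) : ℕ) - (σs j (Sum.inl i) : ℕ))
            + (((sched c) (Sum.inr i) : ℕ) - (σs j (Sum.inr i) : ℕ))) := by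
          rw [Fintype.sum_sum_type, ← Finset.sum_add_distrib]
      _ = ∑ i : Fin m, (if c i ≠ w j i then 1 else 0) :=
          Finset.sum_congr rfl (fun i _ => hterm i)
      _ = (Finset.univ.filter (fun i : Fin m => c i ≠ w j i)).card :=
          (Finset.card_filter _ _).symm
      _ ≤ d := hcd j
  · rintro ⟨τ, hτ⟩
    refine ⟨fun i => decide ((τ (Sum.inl i) : ℕ) < (τ (Sum.inr i) : ℕ)), fun j => ?_⟩
    exact le_trans
      (hamming_le_tardiness (w j) _ τ (σs j) (hσ j) (fun i => by simp))
      (hτ j)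
end

section
/- Let w₁,…,w_n ∈ {0,1}^m be binary strings and d ∈ ℕ. Construct 2m unit-size jobs {A_i, B_i : i ∈ Fin m} and n agents, where agent j's preferred schedule places all jobs of index i before all jobs of index i' whenever i < i', and within index i places A_i before B_i if w_j(i) = 1 and B_i before A_i otherwise. Then there exists a binary string c ∈ {0,1}^m with Hamming distance at most d to every w_j if and only if there exists a schedule τ of the 2m jobs with max_{j=1,…,n} D(τ, σ_j) ≤ 2d, where D(τ,σ) = ∑_i |C_i(τ) − C_i(σ)|. -/
/-!
Every preferred schedule `σ_j` is the block schedule of `w_j`: index `i` occupies the block of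
positions `{2i, 2i+1}`, with `A_i` first iff `w_j i`. Between two block schedules the deviation is
exactly twice the Hamming distance of their strings, which gives a schedule from a centre string.
Conversely, read a string off an arbitrary schedule `τ` by recording whether `A_i` precedes `B_i`.
Whenever that order disagrees with `w_j i`, the two jobs of index `i` are crossed with respect to
their targets `2i`, `2i+1` in `σ_j`, and the triangle inequality makes them cost at least `2`; so
the Hamming distance is at most half the deviation.
-/

open Finset

theorem Nat.bit_eq_bit_iff {b b' : Bool} {n n' : ℕ} : bit b n = bit b' n' ↔ b = b' ∧ n = n' := by
  refine ⟨fun h => ⟨?_, ?_⟩, fun ⟨hb, hn⟩ => hb ▸ hn ▸ rfl⟩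
  · simpa only [testBit_bit_zero] using congrArg (testBit · 0) h
  · simpa only [bit_div_two] using congrArg (· / 2 : ℕ → ℕ) h

theorem two_le_abs_sub_add_abs_sub {x y p q : ℤ} (hxy : x < y) (hqp : q < p) :
    2 ≤ |x - p| + |y - q| := by
  linarith [neg_abs_le (x - p), le_abs_self (y - q)]

theorem two_mul_hammingDist_eq_sum {ι β : Type*} [Fintype ι] [DecidableEq β] (c w : ι → β) :
    2 * (hammingDist c w : ℤ) = ∑ i, if c i ≠ w i then 2 else 0 := by
  rw [hammingDist, card_filter, Nat.cast_sum, mul_sum]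
  exact sum_congr rfl fun i _ => by split_ifs <;> simp

def deviation {α : Type*} [Fintype α] {k : ℕ} (τ σ : α ≃ Fin k) : ℤ :=
  ∑ a, |((τ a : ℕ) : ℤ) - ((σ a : ℕ) : ℤ)|

theorem deviation_sum_type {m k : ℕ} (τ σ : Fin m ⊕ Fin m ≃ Fin k) :
    deviation τ σ = ∑ i, (|((τ (.inl i) : ℕ) : ℤ) - ((σ (.inl i) : ℕ) : ℤ)| +
      |((τ (.inr i) : ℕ) : ℤ) - ((σ (.inr i) : ℕ) : ℤ)|) := by
  rw [deviation, Fintype.sum_sum_type, sum_add_distrib]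

section BlockSchedule

variable {m : ℕ}

/-- `Nat.bit b i = 2 * i + b.toNat`. -/
def blockPosition (c : Fin m → Bool) : Fin m ⊕ Fin m → ℕ
  | .inl i => Nat.bit (!c i) i
  | .inr i => Nat.bit (c i) i

theorem blockPosition_lt (c : Fin m → Bool) (a : Fin m ⊕ Fin m) : blockPosition c a < 2 * m := by
  rcases a with i | i <;> simp only [blockPosition, Nat.bit_val] <;>
    linarith [i.isLt, Bool.toNat_le (c i), Bool.toNat_le (!c i)]

theorem blockPosition_injective (c : Fin m → Bool) : Function.Injective (blockPosition c) := by
  rintro (i | i) (i' | i') h <;>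
    obtain ⟨hc, rfl⟩ := (Nat.bit_eq_bit_iff.1 h).imp_right Fin.ext <;> simp_all

noncomputable def blockSchedule (c : Fin m → Bool) : Fin m ⊕ Fin m ≃ Fin (2 * m) :=
  Equiv.ofBijective (fun a => ⟨blockPosition c a, blockPosition_lt c a⟩) <|
    (Fintype.bijective_iff_injective_and_card _).2
      ⟨fun _ _ h => blockPosition_injective c (Fin.val_eq_of_eq h), by simp [two_mul]⟩

@[simp]
theorem blockSchedule_apply_val (c : Fin m → Bool) (a : Fin m ⊕ Fin m) :
    (blockSchedule c a : ℕ) = blockPosition c a := rfl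

theorem eq_blockSchedule_of_positions (σ : Fin m ⊕ Fin m ≃ Fin (2 * m)) (w : Fin m → Bool)
    (hσ : ∀ i : Fin m,
      (w i = true → (σ (.inl i) : ℕ) = 2 * (i : ℕ) ∧ (σ (.inr i) : ℕ) = 2 * (i : ℕ) + 1) ∧
      (w i = false → (σ (.inr i) : ℕ) = 2 * (i : ℕ) ∧ (σ (.inl i) : ℕ) = 2 * (i : ℕ) + 1)) :
    σ = blockSchedule w := by
  ext (i | i) <;> cases hw : w i <;> simp [blockPosition, Nat.bit_val, hw, hσ i]

theorem deviation_blockSchedule (c w : Fin m → Bool) :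
    deviation (blockSchedule c) (blockSchedule w) = 2 * hammingDist c w := by
  rw [deviation_sum_type, two_mul_hammingDist_eq_sum]
  refine sum_congr rfl fun i _ => ?_
  simp only [blockSchedule_apply_val, blockPosition, Nat.bit_val]
  cases c i <;> cases w i <;> norm_num

def orderString (τ : Fin m ⊕ Fin m ≃ Fin (2 * m)) (i : Fin m) : Bool :=
  τ (.inl i) < τ (.inr i)

theorem two_mul_hammingDist_orderString_le_deviation (τ : Fin m ⊕ Fin m ≃ Fin (2 * m))
    (w : Fin m → Bool) :
    2 * (hammingDist (orderString τ) w : ℤ) ≤ deviation τ (blockSchedule w) := by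
  rw [deviation_sum_type, two_mul_hammingDist_eq_sum]
  refine sum_le_sum fun i _ => ?_
  split_ifs with hne
  · simp only [blockSchedule_apply_val, blockPosition, Nat.bit_val]
    cases hw : w i
    · have hlt : τ (.inl i) < τ (.inr i) := by simpa [orderString, hw] using hne
      simpa using two_le_abs_sub_add_abs_sub (p := 2 * i + 1) (q := 2 * i)
        (Int.ofNat_lt.2 hlt) (by omega)
    · have hlt : τ (.inr i) < τ (.inl i) :=
        lt_of_le_of_ne (by simpa [orderString, hw] using hne)
          (τ.injective.ne Sum.inr_ne_inl)
      simpa [add_comm] using two_le_abs_sub_add_abs_sub (p := 2 * i + 1) (q := 2 * i)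
        (Int.ofNat_lt.2 hlt) (by omega)
  · positivity

end BlockSchedule

/-- Absolute-deviation case of the NP-hardness of the max-D rule (reduction from
Closest String with binary alphabet).  There are `2m` unit-size jobs
`A_i = Sum.inl i`, `B_i = Sum.inr i`; agent `j`'s preferred schedule `σs j`
places all jobs of index `i` before all jobs of index `i'` whenever `i < i'`, and
within index `i` places `A_i` before `B_i` iff `w j i = true` (so positions are
`2i` and `2i+1`).  For unit-size jobs the completion time of a job is its
position plus one, so the absolute deviation of agent `j` is
`D(τ, σs j) = ∑ i, |τ(i) − σs j (i)|`.  Then there is a string `c` within Hamming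
distance `d` of every `w j` iff there is a schedule `τ` with
`max_j D(τ, σs j) ≤ 2d`. -/
theorem max_deviation_closest_string_reduction (m n : ℕ)
    (w : Fin n → Fin m → Bool) (d : ℕ)
    (σs : Fin n → ((Fin m ⊕ Fin m) ≃ Fin (2 * m)))
    (hσ : ∀ (j : Fin n) (i : Fin m),
      (w j i = true → (σs j (Sum.inl i) : ℕ) = 2 * (i : ℕ) ∧
        (σs j (Sum.inr i) : ℕ) = 2 * (i : ℕ) + 1) ∧
      (w j i = false → (σs j (Sum.inr i) : ℕ) = 2 * (i : ℕ) ∧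
        (σs j (Sum.inl i) : ℕ) = 2 * (i : ℕ) + 1)) :
    (∃ c : Fin m → Bool,
        ∀ j : Fin n, (Finset.univ.filter (fun i : Fin m => c i ≠ w j i)).card ≤ d)
      ↔ (∃ τ : (Fin m ⊕ Fin m) ≃ Fin (2 * m),
          ∀ j : Fin n,
            ∑ i : Fin m ⊕ Fin m, |((τ i : ℕ) : ℤ) - ((σs j i : ℕ) : ℤ)| ≤ 2 * d) := by
  have hσs : ∀ j, σs j = blockSchedule (w j) := fun j => eq_blockSchedule_of_positions _ _ (hσ j)
  constructor
  · rintro ⟨c, hc⟩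
    refine ⟨blockSchedule c, fun j => ?_⟩
    change deviation _ _ ≤ _
    rw [hσs, deviation_blockSchedule]
    exact_mod_cast Nat.mul_le_mul_left 2 (hc j)
  · rintro ⟨τ, hτ⟩
    refine ⟨orderString τ, fun j => ?_⟩
    have hτj : deviation τ (blockSchedule (w j)) ≤ 2 * d := hσs j ▸ hτ j
    have hham := (two_mul_hammingDist_orderString_le_deviation τ (w j)).trans hτj
    change hammingDist _ _ ≤ d
    omega
end
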